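/- arXiv:2506.05624 — 2 statements merged into one kernel-verified Lean document; each statement's English description precedes it below -/
import Mathlib

section
/- Let $\mathcal{H}$ be a real Hilbert space, let $y_1,\dots,y_n \in \mathcal{H}$ satisfy $\|y_k\| \le K$ for all $k$, and let $\mathcal{C} = \{\sum_{k=1}^n \alpha_k y_k : \sum_{k=1}^n |\alpha_k| \le 1\}$ be the balanced convex hull. Then for every $\epsilon > 0$, the $\epsilon$-covering number of $\mathcal{C}$ in the norm of $\mathcal{H}$ satisfies $\log \mathcal{N}(\mathcal{C}, \|\cdot\|, \epsilon) \le C K^2 \frac{\log(n+1)}{\epsilon^2}$ for an absolute constant $C$. -/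
/-!
Maurey's empirical method, derandomized. Every point of the balanced hull is a convex combination
`x = ∑ pᵢ vᵢ` of the `2n + 1` atoms `0, ±y k`, all of norm at most `|K|`. Averaging over `i ~ p`
gives `∑ pᵢ ‖s + (vᵢ - x)‖² = ‖s‖² + ∑ pᵢ ‖vᵢ - x‖² ≤ ‖s‖² + K²`, so `m` atoms can be chosen one
at a time with `‖∑ⱼ (v (ω j) - x)‖² ≤ m K²`: their empirical mean lies within `|K| / √m` of `x`.
For `m ≈ K² / ε²` the at most `(2n + 1)ᵐ` empirical means therefore form an `ε`-net, of
log-cardinality at most `m log (2n + 1) ≤ 4 K² log (n + 1) / ε²`. For `ε > |K|` the ball around `0`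
already covers the hull.
-/

open Finset RealInnerProductSpace

theorem exists_le_sum_mul_of_mem_stdSimplex {ι : Type*} [Fintype ι] {w : ι → ℝ}
    (hw : w ∈ stdSimplex ℝ ι) (f : ι → ℝ) : ∃ i, f i ≤ ∑ i, w i * f i := by
  obtain ⟨hw₀, hw₁⟩ := hw
  have hne : (univ : Finset ι).Nonempty := nonempty_of_sum_ne_zero (hw₁ ▸ one_ne_zero)
  obtain ⟨i, -, hi⟩ := univ.exists_mem_eq_inf' hne f
  have := inf_le_centerMass (s := univ) (f := f) (fun i _ => hw₀ i) (by rw [hw₁]; exact one_pos)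
  rw [hi, centerMass, hw₁, inv_one, one_smul] at this
  exact ⟨i, by simpa only [smul_eq_mul] using this⟩

theorem norm_sum_smul_le_of_mem_stdSimplex {E ι : Type*} [SeminormedAddCommGroup E]
    [NormedSpace ℝ E] [Fintype ι] {p : ι → ℝ} (hp : p ∈ stdSimplex ℝ ι) {v : ι → E} {K : ℝ}
    (hv : ∀ i, ‖v i‖ ≤ K) : ‖∑ i, p i • v i‖ ≤ K :=
  calc ‖∑ i, p i • v i‖ ≤ ∑ i, ‖p i • v i‖ := norm_sum_le _ _
    _ ≤ ∑ i, p i * K := sum_le_sum fun i _ => by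
        rw [norm_smul, Real.norm_of_nonneg (hp.1 i)]
        exact mul_le_mul_of_nonneg_left (hv i) (hp.1 i)
    _ = K := by rw [← sum_mul, hp.2, one_mul]

noncomputable def empiricalMean {E ι : Type*} [AddCommGroup E] [Module ℝ E] (v : ι → E) {m : ℕ}
    (ω : Fin m → ι) : E :=
  (m : ℝ)⁻¹ • ∑ j, v (ω j)

section Maurey

variable {H ι : Type*} [NormedAddCommGroup H] [InnerProductSpace ℝ H] [Fintype ι]

theorem sum_mul_norm_add_sq {p : ι → ℝ} (hp : ∑ i, p i = 1) (s : H) (u : ι → H) :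
    ∑ i, p i * ‖s + u i‖ ^ 2 = ‖s‖ ^ 2 + 2 * ⟪s, ∑ i, p i • u i⟫ + ∑ i, p i * ‖u i‖ ^ 2 := by
  simp only [norm_add_sq_real, mul_add, sum_add_distrib, ← sum_mul, hp, one_mul, inner_sum,
    real_inner_smul_right, mul_sum]
  congr 2
  exact sum_congr rfl fun i _ => by ring

theorem exists_norm_sum_sq_le {p : ι → ℝ} (hp : p ∈ stdSimplex ℝ ι) {u : ι → H}
    (hmean : ∑ i, p i • u i = 0) {B : ℝ} (hB : ∑ i, p i * ‖u i‖ ^ 2 ≤ B) :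
    ∀ m : ℕ, ∃ ω : Fin m → ι, ‖∑ j, u (ω j)‖ ^ 2 ≤ m * B
  | 0 => ⟨Fin.elim0, by simp⟩
  | m + 1 => by
    obtain ⟨ω, hω⟩ := exists_norm_sum_sq_le hp hmean hB m
    set s := ∑ j, u (ω j)
    obtain ⟨a, ha⟩ := exists_le_sum_mul_of_mem_stdSimplex hp fun a => ‖s + u a‖ ^ 2
    refine ⟨Fin.snoc ω a, ?_⟩
    rw [Fin.sum_univ_castSucc]
    simp only [Fin.snoc_castSucc, Fin.snoc_last]
    calc ‖s + u a‖ ^ 2 ≤ ∑ i, p i * ‖s + u i‖ ^ 2 := ha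
      _ = ‖s‖ ^ 2 + ∑ i, p i * ‖u i‖ ^ 2 := by
        rw [sum_mul_norm_add_sq hp.2, hmean, inner_zero_right, mul_zero, add_zero]
      _ ≤ (m + 1 : ℕ) * B := by push_cast; linarith

theorem exists_norm_empiricalMean_sub_sq_le {p : ι → ℝ} (hp : p ∈ stdSimplex ℝ ι) {v : ι → H}
    {K : ℝ} (hv : ∀ i, ‖v i‖ ≤ K) {m : ℕ} (hm : 0 < m) :
    ∃ ω : Fin m → ι, ‖empiricalMean v ω - ∑ i, p i • v i‖ ^ 2 ≤ K ^ 2 / m := by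
  set x := ∑ i, p i • v i
  have hmean : ∑ i, p i • (v i - x) = 0 := by
    simp only [smul_sub, sum_sub_distrib, ← sum_smul, hp.2, one_smul, x, sub_self]
  have hvar : ∑ i, p i * ‖v i - x‖ ^ 2 ≤ K ^ 2 :=
    calc ∑ i, p i * ‖v i - x‖ ^ 2 = ∑ i, p i * ‖v i‖ ^ 2 - ‖x‖ ^ 2 := by
          simp only [sub_eq_neg_add _ x, sum_mul_norm_add_sq hp.2, inner_neg_left, norm_neg,
            show ∑ i, p i • v i = x from rfl, real_inner_self_eq_norm_sq]
          ring
      _ ≤ ∑ i, p i * K ^ 2 := by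
          nlinarith [sum_le_sum fun i (_ : i ∈ univ) => mul_le_mul_of_nonneg_left
            (pow_le_pow_left₀ (norm_nonneg _) (hv i) 2) (hp.1 i)]
      _ = K ^ 2 := by rw [← sum_mul, hp.2, one_mul]
  obtain ⟨ω, hω⟩ := exists_norm_sum_sq_le hp hmean hvar m
  refine ⟨ω, ?_⟩
  have hm' : (m : ℝ) ≠ 0 := by positivity
  have hdiff : empiricalMean v ω - x = (m : ℝ)⁻¹ • ∑ j, (v (ω j) - x) := by
    rw [empiricalMean, sum_sub_distrib, smul_sub, sum_const, card_univ, Fintype.card_fin,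
      ← Nat.cast_smul_eq_nsmul ℝ, inv_smul_smul₀ hm']
  rw [hdiff, norm_smul, mul_pow, Real.norm_of_nonneg (by positivity), inv_pow,
    inv_mul_le_iff₀ (by positivity)]
  calc _ ≤ m * K ^ 2 := hω
    _ = (m : ℝ) ^ 2 * (K ^ 2 / m) := by field_simp

theorem exists_dist_empiricalMean_lt {p : ι → ℝ} (hp : p ∈ stdSimplex ℝ ι) {v : ι → H}
    {K : ℝ} (hv : ∀ i, ‖v i‖ ≤ K) {ε : ℝ} (hε : 0 < ε) {m : ℕ} (hm : K ^ 2 < m * ε ^ 2) :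
    ∃ ω : Fin m → ι, dist (∑ i, p i • v i) (empiricalMean v ω) < ε := by
  have hm₀ : 0 < m := Nat.pos_of_ne_zero <| by
    rintro rfl
    rw [Nat.cast_zero, zero_mul] at hm
    exact (sq_nonneg K).not_gt hm
  obtain ⟨ω, hω⟩ := exists_norm_empiricalMean_sub_sq_le hp hv hm₀
  refine ⟨ω, ?_⟩
  rw [dist_comm, dist_eq_norm, ← sq_lt_sq₀ (norm_nonneg _) hε.le]
  exact hω.trans_lt ((div_lt_iff₀ (by positivity)).2 (by linarith))

end Maurey

def signedAtoms {E : Type*} [AddCommGroup E] {n : ℕ} (y : Fin n → E) :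
    Option (Fin n × Bool) → E
  | none => 0
  | some (k, b) => if b then y k else -y k

theorem norm_signedAtoms_le {E : Type*} [SeminormedAddCommGroup E] {n : ℕ} {y : Fin n → E}
    {K : ℝ} (hy : ∀ k, ‖y k‖ ≤ K) (hK : 0 ≤ K) : ∀ i, ‖signedAtoms y i‖ ≤ K
  | none => by simpa [signedAtoms] using hK
  | some (k, true) => by simpa [signedAtoms] using hy k
  | some (k, false) => by simpa [signedAtoms] using hy k

theorem exists_mem_stdSimplex_sum_smul_signedAtoms {E : Type*} [AddCommGroup E] [Module ℝ E]
    {n : ℕ} (y : Fin n → E) {α : Fin n → ℝ} (hα : ∑ k, |α k| ≤ 1) :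
    ∃ p ∈ stdSimplex ℝ (Option (Fin n × Bool)), ∑ i, p i • signedAtoms y i = ∑ k, α k • y k := by
  let p : Option (Fin n × Bool) → ℝ
    | none => 1 - ∑ k, |α k|
    | some (k, b) => if b then (α k)⁺ else (α k)⁻
  refine ⟨p, ⟨?_, ?_⟩, ?_⟩
  · rintro (_ | ⟨k, _ | _⟩)
    · simpa [p] using hα
    · simp [p, negPart_nonneg]
    · simp [p, posPart_nonneg]
  · simp [p, Fintype.sum_option, Fintype.sum_prod_type, posPart_add_negPart]
  · simp only [p, signedAtoms, Fintype.sum_option, Fintype.sum_prod_type, Fintype.sum_bool]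
    simp [smul_neg, ← sub_eq_add_neg, ← sub_smul, posPart_sub_negPart]

theorem log_card_image_le_log_card {α β : Type*} [Fintype α] [Nonempty α] [DecidableEq β]
    (f : α → β) : Real.log (univ.image f).card ≤ Real.log (Fintype.card α) :=
  Real.log_le_log (by simp [Finset.card_pos]) (by exact_mod_cast card_image_le.trans_eq card_univ)

theorem Real.log_two_mul_add_one_le (n : ℕ) : Real.log (2 * n + 1) ≤ 2 * Real.log (n + 1) := by
  rw [show 2 * Real.log (n + 1) = Real.log ((n + 1) ^ 2) by rw [Real.log_pow]; norm_num]
  exact Real.log_le_log (by positivity) (by nlinarith [(n.cast_nonneg : (0 : ℝ) ≤ n)])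

theorem exists_nat_gt_le_two_mul {t : ℝ} (ht : 1 ≤ t) : ∃ m : ℕ, t < m ∧ (m : ℝ) ≤ 2 * t :=
  ⟨⌊t⌋₊ + 1, by push_cast; exact Nat.lt_floor_add_one t,
    by push_cast; linarith [Nat.floor_le (by linarith : 0 ≤ t)]⟩

/-- Maurey's empirical method: covering number bound for the balanced convex
hull of `n` vectors of norm at most `K` in a real Hilbert space. -/
theorem stmt_0 :
    ∃ C : ℝ, 0 < C ∧
      ∀ (H : Type) [NormedAddCommGroup H] [InnerProductSpace ℝ H] [CompleteSpace H]
        (n : ℕ) (y : Fin n → H) (K : ℝ),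
        (∀ k, ‖y k‖ ≤ K) →
        ∀ ε : ℝ, 0 < ε →
          ∃ F : Finset H,
            {x : H | ∃ α : Fin n → ℝ, (∑ k, |α k|) ≤ 1 ∧ x = ∑ k, α k • y k}
              ⊆ ⋃ c ∈ F, Metric.ball c ε ∧
            Real.log F.card ≤ C * K ^ 2 * Real.log (n + 1) / ε ^ 2 := by
  classical
  refine ⟨4, by norm_num, fun H _ _ _ n y K hy ε hε => ?_⟩
  have hatoms := norm_signedAtoms_le (fun k => (hy k).trans (le_abs_self K)) (abs_nonneg K)
  have hweights : ∀ x ∈ {x : H | ∃ α : Fin n → ℝ, (∑ k, |α k|) ≤ 1 ∧ x = ∑ k, α k • y k},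
      ∃ p ∈ stdSimplex ℝ _, x = ∑ i, p i • signedAtoms y i := by
    rintro x ⟨α, hα, rfl⟩
    obtain ⟨p, hp, hsum⟩ := exists_mem_stdSimplex_sum_smul_signedAtoms y hα
    exact ⟨p, hp, hsum.symm⟩
  rcases lt_or_ge |K| ε with hbig | hsmall
  · have hlog : 0 ≤ Real.log (n + 1) := Real.log_nonneg (by simp)
    refine ⟨{0}, fun x hx => ?_, by simp; positivity⟩
    obtain ⟨p, hp, rfl⟩ := hweights x hx
    simpa using (norm_sum_smul_le_of_mem_stdSimplex hp hatoms).trans_lt hbig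
  obtain ⟨m, hm_gt, hm_le⟩ := exists_nat_gt_le_two_mul (t := K ^ 2 / ε ^ 2) <| by
    rw [one_le_div (by positivity), ← sq_abs K]
    exact pow_le_pow_left₀ hε.le hsmall 2
  refine ⟨univ.image (empiricalMean (signedAtoms y) (m := m)), fun x hx => ?_, ?_⟩
  · obtain ⟨p, hp, rfl⟩ := hweights x hx
    obtain ⟨ω, hω⟩ := exists_dist_empiricalMean_lt hp hatoms hε
      (by rwa [sq_abs, ← div_lt_iff₀ (by positivity)])
    exact Set.mem_iUnion₂.2 ⟨_, mem_image_of_mem _ (mem_univ ω), hω⟩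
  calc Real.log (univ.image (empiricalMean (signedAtoms y) (m := m))).card
      ≤ m * Real.log (2 * n + 1) := by
        simpa [Fintype.card_option, Real.log_pow, mul_comm] using
          log_card_image_le_log_card (empiricalMean (signedAtoms y) (m := m))
    _ ≤ (2 * (K ^ 2 / ε ^ 2)) * (2 * Real.log (n + 1)) :=
        mul_le_mul hm_le (Real.log_two_mul_add_one_le n)
          (Real.log_nonneg (by simp)) (by positivity)
    _ = 4 * K ^ 2 * Real.log (n + 1) / ε ^ 2 := by ring
end

section
/- Let $Z$ be a real random variable with $|Z| \le 1$ almost surely, $\mathbb{E}Z = 0$, and $\mathbb{E}Z^2 \le \delta$. Let $Z_1,\dots,Z_n$ be i.i.d. copies of $Z$ and let $a = (a_1,\dots,a_n)$ be real numbers, not all zero. Then for all $t > 0$, $\mathbb{P}\left(\sum_{k=1}^n a_k Z_k \ge t\right) \le \exp\left(-\frac{t}{2\|a\|_\infty} \log \frac{t \|a\|_\infty}{\delta \|a\|_2^2}\right)$, provided $t\|a\|_\infty \ge \delta \|a\|_2^2$. -/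
/-!
Chernoff's method. Since `(e^x - 1 - x) / x²` is nondecreasing, a variable with `|W| ≤ 1`,
mean zero and second moment at most `δ` satisfies `𝔼 e^{cW} ≤ exp (c² δ (e^s - 1 - s) / s²)`
whenever `|c| ≤ s`. Independence then gives, with `A = ‖a‖∞` and `D = δ ‖a‖₂²`,
`ℙ(∑ aₖ Zₖ ≥ t) ≤ exp (-(s / A) t + D (e^s - 1 - s) / A²)` for every `s > 0`. The choice
`e^s = 1 + t A / D`, together with `log (1 + u) ≥ 2u / (u + 2)`, brings the exponent below
`-(t / 2A) log (t A / D)`.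
-/
open Real MeasureTheory ProbabilityTheory
open scoped Nat

namespace Real

lemma exp_le_quadratic_of_nonpos {x : ℝ} (hx : x ≤ 0) : exp x ≤ 1 + x + x ^ 2 / 2 := by
  have h := quadratic_le_exp_of_nonneg (neg_nonneg.2 hx)
  have hinv : exp x * exp (-x) = 1 := by rw [← exp_add, add_neg_cancel, exp_zero]
  nlinarith [exp_pos x, exp_pos (-x), sq_nonneg x]

lemma exp_sub_one_sub_eq_tsum (x : ℝ) :
    exp x - 1 - x = ∑' n : ℕ, x ^ (n + 2) / (n + 2)! := by
  simp only [exp_eq_exp_ℝ, NormedSpace.exp_eq_tsum_div]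
  rw [← (summable_pow_div_factorial x).sum_add_tsum_nat_add 2]
  simp only [Finset.sum_range_succ, Finset.range_one, Finset.sum_singleton, pow_zero, pow_one,
    Nat.factorial_zero, Nat.factorial_one, Nat.cast_one, div_one]
  ring

-- Monotonicity of `(exp x - 1 - x) / x ^ 2` in `|x|`, with the denominators cleared.
lemma exp_sub_one_sub_mul_sq_le {s x : ℝ} (hx : |x| ≤ s) :
    (exp x - 1 - x) * s ^ 2 ≤ x ^ 2 * (exp s - 1 - s) := by
  have hs : 0 ≤ s := (abs_nonneg x).trans hx
  rcases le_or_gt x 0 with hx0 | hx0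
  · have hx' : exp x - 1 - x ≤ x ^ 2 / 2 := by linarith [exp_le_quadratic_of_nonpos hx0]
    have hs' : s ^ 2 / 2 ≤ exp s - 1 - s := by linarith [quadratic_le_exp_of_nonneg hs]
    nlinarith [sq_nonneg x, sq_nonneg s]
  · have hxs : x ≤ s := (abs_le.1 hx).2
    have summable (y : ℝ) : Summable fun n : ℕ ↦ y ^ (n + 2) / (n + 2)! :=
      (summable_nat_add_iff 2).2 (summable_pow_div_factorial y)
    rw [exp_sub_one_sub_eq_tsum, exp_sub_one_sub_eq_tsum, ← tsum_mul_right, ← tsum_mul_left]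
    refine (summable x |>.mul_right _).tsum_le_tsum (fun n ↦ ?_) (summable s |>.mul_left _)
    rw [div_mul_eq_mul_div, mul_div_assoc']
    refine div_le_div_of_nonneg_right ?_ (by positivity)
    calc x ^ (n + 2) * s ^ 2 = x ^ n * (x ^ 2 * s ^ 2) := by ring
      _ ≤ s ^ n * (x ^ 2 * s ^ 2) := by gcongr
      _ = x ^ 2 * s ^ (n + 2) := by ring

lemma add_mul_log_le_mul_log_one_add {u : ℝ} (hu : 0 < u) :
    u + u / 2 * log u ≤ (1 + u) * log (1 + u) := by
  have hlog : log u ≤ log (1 + u) := log_le_log hu (by linarith)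
  have hlower : 2 * u / (u + 2) ≤ log (1 + u) := le_log_one_add_of_nonneg hu.le
  rw [div_le_iff₀ (by linarith)] at hlower
  nlinarith

lemma bennett_exponent_le {A D t s : ℝ} (hA : 0 < A) (hD : 0 < D) (ht : 0 < t)
    (hs : exp s = 1 + t * A / D) :
    -(s / A) * t + D * (exp s - 1 - s) / A ^ 2 ≤ -(t / (2 * A)) * log (t * A / D) := by
  set u := t * A / D with hu_def
  have hu : 0 < u := by positivity
  have hs_log : s = log (1 + u) := by rw [← hs, log_exp]
  have ht_eq : t = u * D / A := by rw [hu_def]; field_simp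
  have key := add_mul_log_le_mul_log_one_add hu
  rw [← hs_log] at key
  rw [hs, ht_eq]
  calc -(s / A) * (u * D / A) + D * (1 + u - 1 - s) / A ^ 2 = D / A ^ 2 * (u - (1 + u) * s) := by
        field_simp; ring
    _ ≤ D / A ^ 2 * -(u / 2 * log u) := by gcongr; linarith
    _ = -(u * D / A / (2 * A)) * log u := by field_simp

end Real

section Bennett

variable {Ω : Type*} [MeasurableSpace Ω] {P : Measure Ω} [IsProbabilityMeasure P]

lemma mgf_le_exp_of_abs_le_one {W : Ω → ℝ} (hW : AEMeasurable W P)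
    (hbdd : ∀ᵐ ω ∂P, |W ω| ≤ 1) (hmean : ∫ ω, W ω ∂P = 0) {v : ℝ}
    (hvar : ∫ ω, W ω ^ 2 ∂P ≤ v) {c s : ℝ} (hs : 0 < s) (hc : |c| ≤ s) :
    mgf W P c ≤ exp (c ^ 2 * v * ((exp s - 1 - s) / s ^ 2)) := by
  set K := (exp s - 1 - s) / s ^ 2
  have hK : 0 ≤ K := div_nonneg (by linarith [add_one_le_exp s]) (by positivity)
  have hW_Icc : ∀ᵐ ω ∂P, W ω ∈ Set.Icc (-1) 1 := by
    filter_upwards [hbdd] with ω h using abs_le.1 h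
  have hW_int : Integrable W P := .of_mem_Icc (-1) 1 hW hW_Icc
  have hW2_int : Integrable (fun ω ↦ W ω ^ 2) P := by
    refine .of_mem_Icc 0 1 (hW.pow_const 2) ?_
    filter_upwards [hbdd] with ω h
    exact ⟨sq_nonneg _, by nlinarith [abs_nonneg (W ω), sq_abs (W ω)]⟩
  have hpointwise : ∀ᵐ ω ∂P, exp (c * W ω) ≤ 1 + c * W ω + c ^ 2 * K * W ω ^ 2 := by
    filter_upwards [hbdd] with ω h
    have hcW : |c * W ω| ≤ s := by
      rw [abs_mul]; nlinarith [abs_nonneg c, abs_nonneg (W ω)]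
    have hquad : exp (c * W ω) - 1 - c * W ω ≤ (c * W ω) ^ 2 * K := by
      rw [mul_div_assoc', le_div_iff₀ (by positivity)]
      exact exp_sub_one_sub_mul_sq_le hcW
    linarith [show (c * W ω) ^ 2 * K = c ^ 2 * K * W ω ^ 2 by ring]
  have hlin_int : Integrable (fun ω ↦ 1 + c * W ω) P :=
    (integrable_const 1).add (hW_int.const_mul c)
  have hquad_int : Integrable (fun ω ↦ c ^ 2 * K * W ω ^ 2) P := hW2_int.const_mul _
  calc mgf W P c
      ≤ ∫ ω, (1 + c * W ω + c ^ 2 * K * W ω ^ 2) ∂P :=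
        integral_mono_ae (integrable_exp_mul_of_mem_Icc hW hW_Icc) (hlin_int.add hquad_int)
          hpointwise
    _ = 1 + c ^ 2 * K * ∫ ω, W ω ^ 2 ∂P := by
        rw [integral_add hlin_int hquad_int, integral_add (integrable_const 1) (hW_int.const_mul c),
          integral_const_mul, integral_const_mul, hmean]
        simp
    _ ≤ 1 + c ^ 2 * v * K := by
        nlinarith [mul_le_mul_of_nonneg_left hvar (mul_nonneg (sq_nonneg c) hK)]
    _ ≤ exp (c ^ 2 * v * K) := by linarith [add_one_le_exp (c ^ 2 * v * K)]

lemma measureReal_sum_mul_ge_le_exp {ι : Type*} [Fintype ι] {Z : ι → Ω → ℝ}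
    (hm : ∀ k, Measurable (Z k)) (hindep : iIndepFun Z P)
    (hbdd : ∀ k, ∀ᵐ ω ∂P, |Z k ω| ≤ 1) (hmean : ∀ k, ∫ ω, Z k ω ∂P = 0) {v : ℝ}
    (hvar : ∀ k, ∫ ω, Z k ω ^ 2 ∂P ≤ v) {a : ι → ℝ} {A : ℝ} (hA : 0 < A)
    (ha : ∀ k, |a k| ≤ A) {s : ℝ} (hs : 0 < s) (t : ℝ) :
    P.real {ω | t ≤ ∑ k, a k * Z k ω} ≤
      exp (-(s / A) * t + v * (∑ k, a k ^ 2) * (exp s - 1 - s) / A ^ 2) := by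
  set θ := s / A
  have hθ : 0 < θ := div_pos hs hA
  set X : ι → Ω → ℝ := fun k ω ↦ a k * Z k ω
  have hmX : ∀ k, Measurable (X k) := fun k ↦ (hm k).const_mul (a k)
  have hindepX : iIndepFun X P :=
    hindep.comp (fun k x ↦ a k * x) (fun k ↦ measurable_const_mul (a k))
  have hmgf (k : ι) : mgf (X k) P θ ≤ exp ((a k * θ) ^ 2 * v * ((exp s - 1 - s) / s ^ 2)) := by
    refine (mgf_const_mul (a k)).trans_le (mgf_le_exp_of_abs_le_one (hm k).aemeasurable (hbdd k)
      (hmean k) (hvar k) hs ?_)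
    rw [abs_mul, abs_of_pos hθ, ← div_mul_cancel₀ s hA.ne', mul_comm]
    exact mul_le_mul_of_nonneg_left (ha k) hθ.le
  have hset : {ω | t ≤ ∑ k, a k * Z k ω} = {ω | t ≤ (∑ k, X k) ω} := by
    simp only [X, Finset.sum_apply]
  calc P.real {ω | t ≤ ∑ k, a k * Z k ω}
      ≤ exp (-θ * t) * mgf (∑ k, X k) P θ := by
        rw [hset]
        refine measure_ge_le_exp_mul_mgf t hθ.le (hindepX.integrable_exp_mul_sum hmX fun k _ ↦ ?_)
        simp only [X, ← mul_assoc]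
        exact integrable_exp_mul_of_mem_Icc (hm k).aemeasurable
          ((hbdd k).mono fun ω h ↦ abs_le.1 h)
    _ ≤ exp (-θ * t) * ∏ k, exp ((a k * θ) ^ 2 * v * ((exp s - 1 - s) / s ^ 2)) := by
        rw [hindepX.mgf_sum hmX]
        gcongr with k
        · exact fun k _ ↦ mgf_nonneg
        · exact hmgf k
    _ = exp (-(s / A) * t + v * (∑ k, a k ^ 2) * (exp s - 1 - s) / A ^ 2) := by
        have hterm (k : ι) : (a k * θ) ^ 2 * v * ((exp s - 1 - s) / s ^ 2) =
            a k ^ 2 * (v * (exp s - 1 - s) / A ^ 2) := by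
          simp only [θ]
          field_simp
        rw [← exp_sum, ← exp_add]
        simp only [hterm, ← Finset.sum_mul, θ]
        congr 1
        ring

end Bennett

theorem stmt_4_general
    {Ω : Type} [MeasurableSpace Ω] (P : Measure Ω) [IsProbabilityMeasure P]
    (n : ℕ) (Z : Fin n → Ω → ℝ) (δ : ℝ) (hδ : 0 < δ)
    (hm : ∀ k, Measurable (Z k))
    (hindep : ProbabilityTheory.iIndepFun Z P)
    (hbdd : ∀ k, ∀ᵐ ω ∂P, |Z k ω| ≤ 1)
    (hmean : ∀ k, ∫ ω, Z k ω ∂P = 0)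
    (hvar : ∀ k, ∫ ω, (Z k ω) ^ 2 ∂P ≤ δ)
    (a : Fin n → ℝ) (ha : a ≠ 0)
    (Ainf A2sq : ℝ)
    (hAinf : IsGreatest (Set.range fun k => |a k|) Ainf)
    (hA2 : A2sq = ∑ k, (a k) ^ 2) :
    ∀ t : ℝ, 0 < t → δ * A2sq ≤ t * Ainf →
      P {ω | t ≤ ∑ k, a k * Z k ω} ≤
        ENNReal.ofReal
          (Real.exp (-(t / (2 * Ainf)) * Real.log (t * Ainf / (δ * A2sq)))) := by
  intro t ht _
  obtain ⟨k₀, hk₀⟩ : ∃ k, a k ≠ 0 := Function.ne_iff.1 ha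
  have hAinf_ge (k : Fin n) : |a k| ≤ Ainf := hAinf.2 ⟨k, rfl⟩
  have hAinf_pos : 0 < Ainf := (abs_pos.2 hk₀).trans_le (hAinf_ge k₀)
  have hA2_pos : 0 < A2sq :=
    hA2 ▸ Finset.sum_pos' (fun k _ ↦ sq_nonneg (a k)) ⟨k₀, Finset.mem_univ _, by positivity⟩
  have hD : 0 < δ * A2sq := mul_pos hδ hA2_pos
  set s := log (1 + t * Ainf / (δ * A2sq))
  have hs_exp : exp s = 1 + t * Ainf / (δ * A2sq) := exp_log (by positivity)
  have hs : 0 < s := log_pos (lt_add_of_pos_right 1 (by positivity))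
  rw [← ofReal_measureReal]
  refine ENNReal.ofReal_le_ofReal ?_
  calc P.real {ω | t ≤ ∑ k, a k * Z k ω}
      ≤ exp (-(s / Ainf) * t + δ * A2sq * (exp s - 1 - s) / Ainf ^ 2) :=
        hA2 ▸ measureReal_sum_mul_ge_le_exp hm hindep hbdd hmean hvar hAinf_pos hAinf_ge hs t
    _ ≤ _ := exp_le_exp.2 (bennett_exponent_le hAinf_pos hD ht hs_exp)

/-- Talagrand's variant of Bennett's inequality: if `Z₁, …, Zₙ` are i.i.d.,
`|Z| ≤ 1` a.s., `𝔼Z = 0`, `𝔼Z² ≤ δ`, and `a` is a vector of reals (not all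
zero) with sup norm `Ainf` and squared `ℓ²` norm `A2sq`, then for `t > 0` with
`t·Ainf ≥ δ·A2sq`,
`ℙ(∑ aₖ Zₖ ≥ t) ≤ exp(-(t/(2‖a‖∞)) log (t‖a‖∞/(δ‖a‖₂²)))`. -/
theorem stmt_4
    {Ω : Type} [MeasurableSpace Ω] (P : Measure Ω) [IsProbabilityMeasure P]
    (n : ℕ) (Z : Fin n → Ω → ℝ) (δ : ℝ) (hδ : 0 < δ)
    (hm : ∀ k, Measurable (Z k))
    (hindep : ProbabilityTheory.iIndepFun Z P)
    (hid : ∀ i j, P.map (Z i) = P.map (Z j))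
    (hbdd : ∀ k, ∀ᵐ ω ∂P, |Z k ω| ≤ 1)
    (hmean : ∀ k, ∫ ω, Z k ω ∂P = 0)
    (hvar : ∀ k, ∫ ω, (Z k ω) ^ 2 ∂P ≤ δ)
    (a : Fin n → ℝ) (ha : a ≠ 0)
    (Ainf A2sq : ℝ)
    (hAinf : IsGreatest (Set.range fun k => |a k|) Ainf)
    (hA2 : A2sq = ∑ k, (a k) ^ 2) :
    ∀ t : ℝ, 0 < t → δ * A2sq ≤ t * Ainf →
      P {ω | t ≤ ∑ k, a k * Z k ω} ≤
        ENNReal.ofReal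
          (Real.exp (-(t / (2 * Ainf)) * Real.log (t * Ainf / (δ * A2sq)))) :=
  stmt_4_general P n Z δ hδ hm hindep hbdd hmean hvar a ha Ainf A2sq hAinf hA2
end
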